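/- arXiv:1903.08208 — 2 statements merged into one kernel-verified Lean document; each statement's English description precedes it below -/
import Mathlib

section
/- For every a > 0 the function g_a(p) = √(|p|⁴ + 16πa|p|²) − |p|² − 8πa + (8πa)²/(2|p|²) is Lebesgue integrable on ℝ³, g_a(p) > 0 for p ≠ 0, and (1/(2(2π)³)) ∫_{ℝ³} g_a(p) dp = 4πa · (128/(15√π)) · a^{3/2}; equivalently, ∫_{ℝ³} g_a(p) dp = (8π/15)(16πa)^{5/2}. (This is the Lee–Huang–Yang integral: replacing the discrete Bogoliubov sum by this integral yields the second-order term 4πρa·(128/(15√π))(ρa³)^{1/2} of the Lee–Huang–Yang formula.) -/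
open MeasureTheory Filter Real

noncomputable section

/-- Three-dimensional Euclidean space. -/
abbrev E3 := EuclideanSpace ℝ (Fin 3)

/-- Embedding of `ℤ³` into `ℝ³`. -/
def zToE (m : Fin 3 → ℤ) : E3 := WithLp.toLp 2 (fun i => (m i : ℝ))

/-- The `i`-th standard basis vector of `ℝ³`. -/
def e3 (i : Fin 3) : E3 := EuclideanSpace.single i 1

/-- The Laplacian of a function on `ℝ³`. -/
def lap (φ : E3 → ℝ) (x : E3) : ℝ :=
  ∑ i : Fin 3, fderiv ℝ (fun y => fderiv ℝ φ y (e3 i)) x (e3 i)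

/-- `f` is the zero-energy scattering solution of the potential `V`:
`f` is continuous, `0 ≤ f ≤ 1`, solves `-Δf + (1/2) V f = 0` in the distributional
sense, and `f(x) → 1` as `|x| → ∞`. -/
structure IsScatteringSol (V f : E3 → ℝ) : Prop where
  cont : Continuous f
  nonneg : ∀ x, 0 ≤ f x
  le_one : ∀ x, f x ≤ 1
  eqn : ∀ φ : E3 → ℝ, ContDiff ℝ (⊤ : ℕ∞) φ → HasCompactSupport φ →
    ∫ x, f x * lap φ x = ∫ x, (1/2) * V x * f x * φ x
  tendsto_one : Tendsto f (cocompact E3) (nhds 1)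

/-- `V` is a nonnegative, spherically symmetric, compactly supported potential in `L³(ℝ³)`. -/
structure IsGPPotential (V : E3 → ℝ) : Prop where
  nonneg : ∀ x, 0 ≤ V x
  radial : ∀ x y : E3, ‖x‖ = ‖y‖ → V x = V y
  compactSupport : HasCompactSupport V
  memL3 : MemLp V 3 volume

/-- The unit box `Λ = [-1/2, 1/2]³`. -/
def box1 : Set E3 := {x | ∀ i, x i ∈ Set.Icc (-(1:ℝ)/2) (1/2)}

/-- The box `Λ^N`. -/
def unitBox (N : ℕ) : Set (Fin N → E3) := {x | ∀ j, x j ∈ box1}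

/-- `ψ` is `ℤ³`-periodic in each of its `N` variables. -/
def IsPeriodicWF {N : ℕ} (ψ : (Fin N → E3) → ℂ) : Prop :=
  ∀ (x : Fin N → E3) (j : Fin N) (m : Fin 3 → ℤ),
    ψ (Function.update x j (x j + zToE m)) = ψ x

/-- `ψ` is symmetric under permutations of its `N` variables. -/
def IsSymmetricWF {N : ℕ} (ψ : (Fin N → E3) → ℂ) : Prop :=
  ∀ (σ : Equiv.Perm (Fin N)) (x : Fin N → E3), ψ (x ∘ σ) = ψ x

/-- The direction in `(ℝ³)^N` corresponding to the `i`-th coordinate of the `j`-th particle. -/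
def dirN {N : ℕ} (j : Fin N) (i : Fin 3) : Fin N → E3 :=
  fun j' => if j' = j then e3 i else 0

/-- `Σ_{j=1}^N |∇_{x_j} ψ|²` at the point `x`. -/
def gradSq {N : ℕ} (ψ : (Fin N → E3) → ℂ) (x : Fin N → E3) : ℝ :=
  ∑ j : Fin N, ∑ i : Fin 3, ‖fderiv ℝ ψ x (dirN j i)‖ ^ 2

/-- The periodized Gross-Pitaevskii pair interaction
`Σ_{i<j} Σ_{m ∈ ℤ³} N² V(N(x_i - x_j + m))`. -/
def pairInterGP (V : E3 → ℝ) (N : ℕ) (x : Fin N → E3) : ℝ :=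
  ∑ p ∈ Finset.univ.filter (fun p : Fin N × Fin N => p.1 < p.2),
    ∑' m : Fin 3 → ℤ, (N : ℝ) ^ 2 * V ((N : ℝ) • (x p.1 - x p.2 + zToE m))

/-- The Gross-Pitaevskii quadratic form. -/
def QGP (V : E3 → ℝ) (N : ℕ) (ψ : (Fin N → E3) → ℂ) : ℝ :=
  ∫ x in unitBox N, (gradSq ψ x + pairInterGP V N x * ‖ψ x‖ ^ 2)

/-- `ψ` is normalized in `L²(Λ^N)`. -/
def IsNormalizedWF {N : ℕ} (ψ : (Fin N → E3) → ℂ) : Prop :=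
  ∫ x in unitBox N, ‖ψ x‖ ^ 2 = 1

/-- Smooth, periodic, permutation-symmetric `N`-particle wave functions. -/
def GPAdmissible (N : ℕ) : Set ((Fin N → E3) → ℂ) :=
  {ψ | ContDiff ℝ (⊤ : ℕ∞) ψ ∧ IsPeriodicWF ψ ∧ IsSymmetricWF ψ}

/-- The ground state energy of the Gross-Pitaevskii Hamiltonian. -/
def EGP (V : E3 → ℝ) (N : ℕ) : ℝ :=
  sInf {E | ∃ ψ ∈ GPAdmissible N, IsNormalizedWF ψ ∧ E = QGP V N ψ}

/-- The Euclidean norm of a point of `ℤ³`. -/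
def znorm (m : Fin 3 → ℤ) : ℝ := ‖zToE m‖

/-- The partial sum `Σ_{p ∈ ℤ³\{0}, |p₁|,|p₂|,|p₃| ≤ M} cos(|p|)/|p|²`. -/
def boxSum (M : ℕ) : ℝ :=
  ∑ p ∈ (Fintype.piFinset fun _ : Fin 3 => Finset.Icc (-(M : ℤ)) (M : ℤ)).erase 0,
    Real.cos (znorm p) / (znorm p) ^ 2

/-- The finite-volume constant `e_Λ = 2 - lim_{M→∞} Σ_{p ∈ ℤ³\{0}, |pᵢ| ≤ M} cos(|p|)/|p|²`. -/
def eLambda : ℝ := 2 - limUnder atTop boxSum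

/-- The set `Λ*₊ = 2πℤ³ \ {0}`, parametrized by nonzero points of `ℤ³`. -/
def Lstar := {m : Fin 3 → ℤ // m ≠ 0}

/-- The momentum `2π p ∈ Λ*₊` associated with a nonzero `p ∈ ℤ³`. -/
def mom (p : Lstar) : E3 := (2 * π) • zToE p.1

/-- The summand `q² + 8πa - √(q⁴ + 16πa q²) - (8πa)²/(2q²)` of the Bogoliubov energy sum. -/
def bogTerm (a : ℝ) (q : ℝ) : ℝ :=
  q ^ 2 + 8 * π * a - Real.sqrt (q ^ 4 + 16 * π * a * q ^ 2) - (8 * π * a) ^ 2 / (2 * q ^ 2)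

/-- The condensate fraction `⟨φ₀, γ_N φ₀⟩` of an `(N+1)`-particle wave function. -/
def condFrac (N : ℕ) (ψ : (Fin (N + 1) → E3) → ℂ) : ℝ :=
  ∫ y in unitBox N, ‖∫ x in box1, ψ (Fin.cons x y)‖ ^ 2

/-- The periodized mean-field pair interaction `(κ/N) Σ_{i<j} Σ_{m ∈ ℤ³} V(x_i - x_j + m)`. -/
def pairInterMF (V : E3 → ℝ) (κ : ℝ) (N : ℕ) (x : Fin N → E3) : ℝ :=
  (κ / (N : ℝ)) * ∑ p ∈ Finset.univ.filter (fun p : Fin N × Fin N => p.1 < p.2),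
    ∑' m : Fin 3 → ℤ, V (x p.1 - x p.2 + zToE m)

/-- The mean-field quadratic form. -/
def QMF (V : E3 → ℝ) (κ : ℝ) (N : ℕ) (ψ : (Fin N → E3) → ℂ) : ℝ :=
  ∫ x in unitBox N, (gradSq ψ x + pairInterMF V κ N x * ‖ψ x‖ ^ 2)

/-- The mean-field ground state energy. -/
def EMF (V : E3 → ℝ) (κ : ℝ) (N : ℕ) : ℝ :=
  sInf {E | ∃ ψ ∈ GPAdmissible N, IsNormalizedWF ψ ∧ E = QMF V κ N ψ}

/-- The Fourier transform `V̂(k) = ∫ V(x) e^{-ik·x} dx`, which for a real, radial `V`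
equals `∫ V(x) cos(k·x) dx`. -/
def Vhat (V : E3 → ℝ) (k : E3) : ℝ := ∫ x, V x * Real.cos (inner ℝ k x)
/-- The Lee-Huang-Yang integrand
`g_a(p) = √(|p|⁴+16πa|p|²) − |p|² − 8πa + (8πa)²/(2|p|²)`. -/
def gLHY (a : ℝ) (p : E3) : ℝ :=
  Real.sqrt (‖p‖ ^ 4 + 16 * π * a * ‖p‖ ^ 2) - ‖p‖ ^ 2 - 8 * π * a
    + (8 * π * a) ^ 2 / (2 * ‖p‖ ^ 2)

open scoped ENNReal NNReal

/-! ### Auxiliary machinery for the Lee-Huang-Yang integral -/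

/-- The radial profile of the LHY integrand, with `c = 8πa`. -/
def Gc (c : ℝ) (r : ℝ) : ℝ :=
  Real.sqrt (r^4 + 2*c*r^2) - r^2 - c + c^2/(2*r^2)

/-- An antiderivative of `r^2 * Gc c r` on `(0, ∞)`. -/
def Fc (c : ℝ) (r : ℝ) : ℝ :=
  ((r^2+2*c)^2/5 - 2*c*(r^2+2*c)/3) * Real.sqrt (r^2+2*c) - r^5/5 - c*r^3/3 + c^2*r/2

lemma sqrt_gt_aux {c r : ℝ} (hc : 0 < c) (hr : 0 < r) :
    r^2 + c - c^2/(2*r^2) < Real.sqrt (r^4 + 2*c*r^2) := by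
  have harg : (0:ℝ) < r^4 + 2*c*r^2 := by positivity
  set s := Real.sqrt (r^4 + 2*c*r^2) with hs
  have hs0 : 0 < s := Real.sqrt_pos.2 harg
  have hss : s * s = r^4 + 2*c*r^2 := by
    rw [← pow_two]; exact Real.sq_sqrt harg.le
  have h2r : (0:ℝ) < 2*r^2 := by positivity
  have key : 2*r^2*(r^2 + c) - c^2 < 2*r^2 * s := by
    rcases le_or_gt (2*r^2*(r^2+c) - c^2) 0 with h | h
    · nlinarith [mul_pos (mul_pos two_pos (mul_pos hr hr)) hs0]
    · by_contra hcon
      push_neg at hcon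
      have hsq : (2*r^2*s) * (2*r^2*s) ≤ (2*r^2*(r^2+c) - c^2) * (2*r^2*(r^2+c) - c^2) :=
        mul_le_mul hcon hcon (by positivity) h.le
      have hL : 2*r^2*s*(2*r^2*s) = 4*r^4*(r^4+2*c*r^2) := by
        calc 2*r^2*s*(2*r^2*s) = 4*r^4*(s*s) := by ring
        _ = 4*r^4*(r^4+2*c*r^2) := by rw [hss]
      have hX : (2*r^2*(r^2+c) - c^2)*(2*r^2*(r^2+c) - c^2) - 4*r^4*(r^4+2*c*r^2)
          = c^3*(c - 4*r^2) := by ring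
      have hprod : 0 ≤ c^3*(c - 4*r^2) := by linarith [hsq, hL, hX]
      have hcge : 4*r^2 ≤ c := by
        by_contra hlt
        push_neg at hlt
        have : c^3*(c - 4*r^2) < 0 :=
          mul_neg_of_pos_of_neg (by positivity) (by linarith)
        linarith
      nlinarith [mul_le_mul_of_nonneg_left hcge hc.le,
        mul_le_mul_of_nonneg_left hcge (le_of_lt (mul_pos hr hr)), mul_pos hr hr]
  have hdq : (2*r^2*(r^2+c) - c^2)/(2*r^2) < s := by
    rw [div_lt_iff₀ h2r]; linarith [key]
  have heq : (2*r^2*(r^2+c) - c^2)/(2*r^2) = r^2 + c - c^2/(2*r^2) := by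
    field_simp
  linarith [hdq, heq.le, heq.ge]

lemma Gc_pos {c r : ℝ} (hc : 0 < c) (hr : 0 < r) : 0 < Gc c r := by
  have := sqrt_gt_aux hc hr
  unfold Gc
  linarith

lemma sqrt_split {c r : ℝ} (hr : 0 ≤ r) :
    Real.sqrt (r^4 + 2*c*r^2) = r * Real.sqrt (r^2+2*c) := by
  rw [show r^4 + 2*c*r^2 = r^2*(r^2+2*c) by ring, Real.sqrt_mul (sq_nonneg r),
    Real.sqrt_sq hr]

lemma hasDerivAt_Fc {c r : ℝ} (hc : 0 < c) (hr : 0 < r) :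
    HasDerivAt (Fc c) (r^2 * Gc c r) r := by
  have hu : (0:ℝ) < r^2 + 2*c := by positivity
  obtain ⟨t, ht0, htt, hteq⟩ : ∃ t : ℝ, 0 < t ∧ t*t = r^2+2*c ∧
      Real.sqrt (r^2+2*c) = t := by
    refine ⟨Real.sqrt (r^2+2*c), Real.sqrt_pos.2 hu, ?_, rfl⟩
    rw [← pow_two]; exact Real.sq_sqrt hu.le
  have hu' : HasDerivAt (fun x : ℝ => x^2 + 2*c) (2*r) r := by
    simpa using ((hasDerivAt_pow 2 r).add_const (2*c))
  have hsq : HasDerivAt (fun x : ℝ => Real.sqrt (x^2+2*c)) (2*r / (2*t)) r := by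
    rw [← hteq]; exact hu'.sqrt (ne_of_gt hu)
  have hpoly : HasDerivAt (fun x : ℝ => (x^2+2*c)^2/5 - 2*c*(x^2+2*c)/3)
      (2*(r^2+2*c)*(2*r)/5 - 2*c*(2*r)/3) r := by
    have h1 : HasDerivAt (fun x : ℝ => ((x^2+2*c)^2)) (2*(r^2+2*c)*(2*r)) r := by
      simpa [mul_comm] using (hu'.fun_pow 2)
    exact (h1.div_const 5).sub ((hu'.const_mul (2*c)).div_const 3)
  have hmul := hpoly.mul hsq
  have hp5 : HasDerivAt (fun x : ℝ => x^5/5) (r^4) r := by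
    simpa using ((hasDerivAt_pow 5 r).div_const 5)
  have hp3 : HasDerivAt (fun x : ℝ => c*x^3/3) (c*r^2) r := by
    have h := ((hasDerivAt_pow 3 r).const_mul c).div_const 3
    refine h.congr_deriv ?_
    push_cast; ring
  have hp1 : HasDerivAt (fun x : ℝ => c^2*x/2) (c^2/2) r := by
    simpa using ((hasDerivAt_id r).const_mul (c^2)).div_const 2
  have htotal := ((hmul.sub hp5).sub hp3).add hp1
  have hF : Fc c = fun x => ((x^2+2*c)^2/5 - 2*c*(x^2+2*c)/3) * Real.sqrt (x^2+2*c)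
      - x^5/5 - c*x^3/3 + c^2*x/2 := rfl
  rw [hF]
  refine htotal.congr_deriv ?_
  symm
  have hGc : Gc c r = r*t - r^2 - c + c^2/(2*r^2) := by
    unfold Gc
    rw [sqrt_split hr.le, hteq]
  rw [hGc, hteq, show r^2+2*c = t*t from htt.symm]
  field_simp
  linear_combination (-30*r*t) * htt

lemma tendsto_Fc {c : ℝ} (hc : 0 < c) : Tendsto (Fc c) atTop (nhds 0) := by
  set N : ℝ → ℝ := fun r => 128/225*c^5 - c^4/4*r^2 - c^3/5*r^4 with hN
  set Q : ℝ → ℝ := fun r => (r^2+2*c)^2/5 - 2*c*(r^2+2*c)/3 with hQdef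
  set P : ℝ → ℝ := fun r => r^5/5 + c*r^3/3 - c^2*r/2 with hPdef
  set D : ℝ → ℝ := fun r => Q r * Real.sqrt (r^2+2*c) + P r with hDdef
  have hev : ∀ᶠ r in atTop, Fc c r = (N r / r^5) / (D r / r^5) := by
    filter_upwards [eventually_ge_atTop (2*c+1)] with r hr
    have hr0 : (0:ℝ) < r := by nlinarith
    have hrc : 2*c ≤ r := by nlinarith
    have hr1 : (1:ℝ) ≤ r := by nlinarith
    have hu : (0:ℝ) < r^2 + 2*c := by positivity
    obtain ⟨t, ht0, htt, hteq⟩ : ∃ t : ℝ, 0 < t ∧ t*t = r^2+2*c ∧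
        Real.sqrt (r^2+2*c) = t := by
      refine ⟨Real.sqrt (r^2+2*c), Real.sqrt_pos.2 hu, ?_, rfl⟩
      rw [← pow_two]; exact Real.sq_sqrt hu.le
    have hr2 : 2*c ≤ r^2 := by nlinarith
    have hQ : 0 < Q r := by
      simp only [hQdef]
      nlinarith [hu]
    have hP : 0 < P r := by
      simp only [hPdef]
      nlinarith [mul_self_le_mul_self (le_of_lt (by positivity : (0:ℝ) < 2*c)) hr2,
        hr0, mul_pos (mul_pos hc hr0) (mul_pos hr0 hr0), mul_pos hr0 hr0]
    have hD : 0 < D r := by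
      simp only [hDdef]
      have := mul_pos hQ (hteq ▸ ht0)
      nlinarith [this, hP]
    have hmain : Fc c r * D r = N r := by
      simp only [hDdef, hQdef, hPdef, hN, Fc, hteq]
      linear_combination ((r^2+2*c)^2/5 - 2*c*(r^2+2*c)/3)^2 * htt
    have h5 : (r:ℝ)^5 ≠ 0 := by positivity
    have hcan : N r / r^5 / (D r / r^5) = N r / D r := by
      rw [div_div_div_comm, div_self h5, div_one]
    rw [hcan, eq_div_iff hD.ne']
    exact hmain
  have hnum : Tendsto (fun r => N r / r^5) atTop (nhds 0) := by
    have heq : ∀ᶠ r in atTop, N r / r^5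
        = (128/225*c^5)/r^5 - (c^4/4)/r^3 - (c^3/5)/r := by
      filter_upwards [eventually_gt_atTop (0:ℝ)] with r hr
      field_simp
      ring
    have h1 : Tendsto (fun r : ℝ => (128/225*c^5)/r^5) atTop (nhds 0) :=
      tendsto_const_nhds.div_atTop (tendsto_pow_atTop (by norm_num))
    have h2 : Tendsto (fun r : ℝ => (c^4/4)/r^3) atTop (nhds 0) :=
      tendsto_const_nhds.div_atTop (tendsto_pow_atTop (by norm_num))
    have h3 : Tendsto (fun r : ℝ => (c^3/5)/r) atTop (nhds 0) :=
      tendsto_const_nhds.div_atTop tendsto_id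
    have := (h1.sub h2).sub h3
    simp only [sub_zero, zero_sub, neg_zero] at this
    exact Tendsto.congr' (Filter.EventuallyEq.symm heq) (by simpa using this)
  have hsqr : Tendsto (fun r : ℝ => Real.sqrt (r^2+2*c)/r) atTop (nhds 1) := by
    have heq : ∀ᶠ r in atTop, Real.sqrt (r^2+2*c)/r = Real.sqrt (1+2*c/r^2) := by
      filter_upwards [eventually_gt_atTop (0:ℝ)] with r hr
      rw [show r^2+2*c = r^2*(1+2*c/r^2) by field_simp,
        Real.sqrt_mul (sq_nonneg r), Real.sqrt_sq hr.le,
        mul_comm, mul_div_assoc, div_self hr.ne', mul_one]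
    have hin : Tendsto (fun r : ℝ => 1+2*c/r^2) atTop (nhds 1) := by
      have := (tendsto_const_nhds (x := (2*c : ℝ))).div_atTop
        (tendsto_pow_atTop (n := 2) (by norm_num))
      simpa using tendsto_const_nhds.add this
    have := (Real.continuous_sqrt.tendsto 1).comp hin
    rw [Real.sqrt_one] at this
    exact Tendsto.congr' (Filter.EventuallyEq.symm heq) this
  have hQ4 : Tendsto (fun r : ℝ => Q r / r^4) atTop (nhds (1/5)) := by
    have heq : ∀ᶠ r in atTop, Q r / r^4
        = 1/5 + (4*c/5 - 2*c/3)/r^2 + (4*c^2/5 - 4*c^2/3)/r^4 := by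
      filter_upwards [eventually_gt_atTop (0:ℝ)] with r hr
      simp only [hQdef]
      field_simp
      ring
    have h1 : Tendsto (fun r : ℝ => (4*c/5 - 2*c/3)/r^2) atTop (nhds 0) :=
      tendsto_const_nhds.div_atTop (tendsto_pow_atTop (by norm_num))
    have h2 : Tendsto (fun r : ℝ => (4*c^2/5 - 4*c^2/3)/r^4) atTop (nhds 0) :=
      tendsto_const_nhds.div_atTop (tendsto_pow_atTop (by norm_num))
    have := (tendsto_const_nhds (x := (1/5:ℝ))).add h1 |>.add h2
    simp only [add_zero] at this
    exact Tendsto.congr' (Filter.EventuallyEq.symm heq) this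
  have hP5 : Tendsto (fun r : ℝ => P r / r^5) atTop (nhds (1/5)) := by
    have heq : ∀ᶠ r in atTop, P r / r^5
        = 1/5 + (c/3)/r^2 - (c^2/2)/r^4 := by
      filter_upwards [eventually_gt_atTop (0:ℝ)] with r hr
      simp only [hPdef]
      field_simp
    have h1 : Tendsto (fun r : ℝ => (c/3)/r^2) atTop (nhds 0) :=
      tendsto_const_nhds.div_atTop (tendsto_pow_atTop (by norm_num))
    have h2 : Tendsto (fun r : ℝ => (c^2/2)/r^4) atTop (nhds 0) :=
      tendsto_const_nhds.div_atTop (tendsto_pow_atTop (by norm_num))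
    have := ((tendsto_const_nhds (x := (1/5:ℝ))).add h1).sub h2
    simp only [add_zero, sub_zero] at this
    exact Tendsto.congr' (Filter.EventuallyEq.symm heq) this
  have hden : Tendsto (fun r => D r / r^5) atTop (nhds (2/5)) := by
    have heq : ∀ᶠ r in atTop, D r / r^5
        = (Q r / r^4) * (Real.sqrt (r^2+2*c)/r) + P r / r^5 := by
      filter_upwards [eventually_gt_atTop (0:ℝ)] with r hr
      simp only [hDdef]
      field_simp
    have h0 := (hQ4.mul hsqr).add hP5
    have h25 : (1/5:ℝ)*1 + 1/5 = 2/5 := by norm_num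
    rw [h25] at h0
    exact Tendsto.congr' (Filter.EventuallyEq.symm heq) h0
  have := hnum.div hden (by norm_num)
  simp only [zero_div] at this
  exact Tendsto.congr' (Filter.EventuallyEq.symm hev) this

lemma continuous_Fc (c : ℝ) : Continuous (Fc c) := by
  unfold Fc
  fun_prop

lemma integrableOn_Gc {c : ℝ} (hc : 0 < c) :
    IntegrableOn (fun r => r^2 * Gc c r) (Set.Ioi (0:ℝ)) :=
  integrableOn_Ioi_deriv_of_nonneg (continuous_Fc c).continuousWithinAt
    (fun x hx => hasDerivAt_Fc hc hx)
    (fun x hx => mul_nonneg (sq_nonneg x) (Gc_pos hc hx).le)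
    (tendsto_Fc hc)

lemma integral_Gc {c : ℝ} (hc : 0 < c) :
    ∫ r in Set.Ioi (0:ℝ), r^2 * Gc c r = 8/15*c^2*Real.sqrt (2*c) := by
  rw [integral_Ioi_of_hasDerivAt_of_tendsto (continuous_Fc c).continuousWithinAt
    (fun x hx => hasDerivAt_Fc hc hx) (integrableOn_Gc hc) (tendsto_Fc hc)]
  unfold Fc
  norm_num
  ring

lemma integrable_radial (f : ℝ → ℝ)
    (hi : IntegrableOn (fun r => r^2 * f r) (Set.Ioi (0:ℝ))) :
    Integrable (fun x : E3 => f ‖x‖) (volume : Measure E3) := by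
  set μ : Measure E3 := volume with hμ
  have hemb : MeasurableEmbedding ((↑) : Set.Ioi (0:ℝ) → ℝ) :=
    MeasurableEmbedding.subtype_coe measurableSet_Ioi
  have hmap : Measure.map ((↑) : Set.Ioi (0:ℝ) → ℝ)
      (Measure.comap Subtype.val (volume : Measure ℝ))
      = (volume : Measure ℝ).restrict (Set.Ioi 0) := by
    rw [hemb.map_comap, Subtype.range_coe]
  have h5 : Integrable (fun r : Set.Ioi (0:ℝ) => (r:ℝ)^2 * f r)
      (Measure.comap Subtype.val (volume : Measure ℝ)) := by
    have := (hemb.integrable_map_iff (g := fun r : ℝ => r^2 * f r)).1 (by rwa [hmap])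
    exact this
  have h4 : Integrable (fun r : Set.Ioi (0:ℝ) => f r) (Measure.volumeIoiPow 2) := by
    rw [Measure.volumeIoiPow]
    have hm : Measurable fun r : Set.Ioi (0:ℝ) => ((r:ℝ)^2).toNNReal :=
      (measurable_subtype_coe.pow_const 2).real_toNNReal
    rw [show (fun r : Set.Ioi (0:ℝ) => ENNReal.ofReal ((r:ℝ)^2))
        = (fun r : Set.Ioi (0:ℝ) => (((r:ℝ)^2).toNNReal : ℝ≥0∞)) from rfl]
    rw [integrable_withDensity_iff_integrable_smul hm]
    apply h5.congr
    filter_upwards [] with r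
    rw [NNReal.smul_def, Real.coe_toNNReal _ (sq_nonneg _)]
    rfl
  have h3 : Integrable (fun p : Metric.sphere (0:E3) 1 × Set.Ioi (0:ℝ) => f p.2)
      (μ.toSphere.prod (Measure.volumeIoiPow 2)) := by
    have := (integrable_const (1:ℝ) (μ := μ.toSphere)).smul_prod h4
    simpa using this
  have h2 : Integrable (fun x : ({0}ᶜ : Set E3) => f ‖(x:E3)‖)
      (Measure.comap Subtype.val μ) := by
    have hdim : Module.finrank ℝ E3 = 3 := finrank_euclideanSpace_fin
    have hmp := Measure.measurePreserving_homeomorphUnitSphereProd μ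
    rw [show Module.finrank ℝ E3 - 1 = 2 by rw [hdim]] at hmp
    have := (hmp.integrable_comp_emb
      (Homeomorph.measurableEmbedding _)
      (g := fun p : Metric.sphere (0:E3) 1 × Set.Ioi (0:ℝ) => f p.2)).2 h3
    simpa [Function.comp_def, homeomorphUnitSphereProd] using this
  have hmap0 : Measure.map ((↑) : ({0}ᶜ : Set E3) → E3)
      (Measure.comap Subtype.val μ) = μ.restrict ({0}ᶜ) := by
    rw [(MeasurableEmbedding.subtype_coe (measurableSet_singleton (0:E3)).compl).map_comap,
      Subtype.range_coe]
  have h1 : Integrable (fun x : E3 => f ‖x‖) (μ.restrict ({0}ᶜ)) := by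
    rw [← hmap0]
    exact ((MeasurableEmbedding.subtype_coe
      (measurableSet_singleton (0:E3)).compl).integrable_map_iff).2 h2
  rwa [restrict_compl_singleton] at h1

lemma volume_ball_E3 : ((volume : Measure E3) (Metric.ball 0 1)).toReal = 4/3*π := by
  have hΓ : Real.Gamma ((3:ℝ)/2 + 1) = 3/4 * Real.sqrt π := by
    rw [Real.Gamma_add_one (by norm_num), show (3:ℝ)/2 = 1/2 + 1 by norm_num,
      Real.Gamma_add_one (by norm_num), Real.Gamma_one_half_eq]
    ring
  have hsq : Real.sqrt π ^ 2 = π := Real.sq_sqrt pi_pos.le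
  have hcube : Real.sqrt π ^ 3 = π * Real.sqrt π := by
    rw [pow_succ, hsq]
  rw [EuclideanSpace.volume_ball]
  simp only [Fintype.card_fin]
  rw [ENNReal.toReal_mul]
  push_cast
  rw [hΓ, ENNReal.toReal_ofReal (by positivity), ENNReal.toReal_pow,
    ENNReal.toReal_ofReal (by norm_num)]
  rw [hcube]
  have hπ : Real.sqrt π ≠ 0 := by positivity
  field_simp

lemma integral_radial_Gc {c : ℝ} (hc : 0 < c) :
    ∫ x : E3, Gc c ‖x‖ = 4*π*(8/15*c^2*Real.sqrt (2*c)) := by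
  rw [MeasureTheory.integral_fun_norm_addHaar (volume : Measure E3) (Gc c)]
  have hdim : Module.finrank ℝ E3 = 3 := finrank_euclideanSpace_fin
  rw [hdim]
  rw [measureReal_def, volume_ball_E3]
  simp only [smul_eq_mul, nsmul_eq_mul]
  have : ∫ y in Set.Ioi (0:ℝ), y ^ (3-1) * Gc c y = 8/15*c^2*Real.sqrt (2*c) := by
    rw [← integral_Gc hc]
  rw [this]
  push_cast
  ring

/-- For every `a > 0`, the function `g_a` is Lebesgue integrable on `ℝ³`,
positive away from `p = 0`, and
`(1/(2(2π)³)) ∫ g_a = 4πa (128/(15√π)) a^{3/2}`, equivalently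
`∫ g_a = (8π/15)(16πa)^{5/2}` (the Lee-Huang-Yang integral). -/
theorem LHY_integral (a : ℝ) (ha : 0 < a) :
    Integrable (gLHY a) volume ∧
    (∀ p : E3, p ≠ 0 → 0 < gLHY a p) ∧
    (1 / (2 * (2 * π) ^ 3)) * (∫ p : E3, gLHY a p)
      = 4 * π * a * (128 / (15 * Real.sqrt π)) * a ^ ((3 : ℝ) / 2) ∧
    (∫ p : E3, gLHY a p) = (8 * π / 15) * (16 * π * a) ^ ((5 : ℝ) / 2) := by
  have hc : (0:ℝ) < 8*π*a := by positivity
  have hfun : gLHY a = fun p : E3 => Gc (8*π*a) ‖p‖ := by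
    funext p
    unfold gLHY Gc
    rw [show ‖p‖^4 + 2*(8*π*a)*‖p‖^2 = ‖p‖^4 + 16*π*a*‖p‖^2 by ring]
  have hval : (∫ p : E3, gLHY a p) = 4*π*(8/15*(8*π*a)^2*Real.sqrt (2*(8*π*a))) := by
    rw [hfun, integral_radial_Gc hc]
  have hsπ : Real.sqrt π * Real.sqrt π = π := Real.mul_self_sqrt pi_pos.le
  have hsa : Real.sqrt a * Real.sqrt a = a := Real.mul_self_sqrt ha.le
  have hsqrt2c : Real.sqrt (2*(8*π*a)) = 4*(Real.sqrt π*Real.sqrt a) := by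
    rw [show 2*(8*π*a) = (4*(Real.sqrt π*Real.sqrt a))^2 by
      nlinarith [hsπ, hsa]]
    exact Real.sqrt_sq (by positivity)
  refine ⟨?_, ?_, ?_, ?_⟩
  · rw [hfun]
    exact integrable_radial _ (integrableOn_Gc hc)
  · intro p hp
    rw [hfun]
    exact Gc_pos hc (norm_pos_iff.2 hp)
  · rw [hval, hsqrt2c]
    have ha32 : a ^ ((3:ℝ)/2) = a * Real.sqrt a := by
      rw [show (3:ℝ)/2 = 1 + 1/2 by norm_num, Real.rpow_add ha, Real.rpow_one,
        ← Real.sqrt_eq_rpow]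
    rw [ha32]
    have hππ : Real.sqrt π ≠ 0 := by positivity
    have hπ0 : π ≠ 0 := pi_pos.ne'
    field_simp
    linear_combination (2048:ℝ) * hsπ
  · rw [hval]
    have h52 : (16*π*a) ^ ((5:ℝ)/2) = (16*π*a)^2 * Real.sqrt (16*π*a) := by
      rw [show (5:ℝ)/2 = 2 + 1/2 by norm_num, Real.rpow_add (by positivity),
        ← Real.sqrt_eq_rpow, Real.rpow_two]
    rw [h52, show (16:ℝ)*π*a = 2*(8*π*a) by ring]
    ring


end
end

section
/- For all ρ > 0 and a > 0, the function p ↦ ( |p|² + 8πρa − √(|p|⁴ + 16πρa|p|²) ) / ( 2√(|p|⁴ + 16πρa|p|²) ) is Lebesgue integrable on ℝ³ and (2π)^{−3} ∫_{ℝ³} ( |p|² + 8πρa − √(|p|⁴ + 16πρa|p|²) ) / ( 2√(|p|⁴ + 16πρa|p|²) ) dp = (8/(3√π)) (ρa)^{3/2}. (This is the Bogoliubov prediction ρ₊/ρ = (8/(3√π))√(ρa³) for the condensate depletion of a dilute Bose gas.) -/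
open MeasureTheory Filter Real

noncomputable section

/-- The Bogoliubov momentum distribution of the particles outside the condensate (after
replacing the Fourier transform of the potential by `8πa`), with density `ρ` and scattering
length `a`. -/
def deplIntegrand (ρ a : ℝ) (p : E3) : ℝ :=
  (‖p‖ ^ 2 + 8 * π * ρ * a - Real.sqrt (‖p‖ ^ 4 + 16 * π * ρ * a * ‖p‖ ^ 2)) /
    (2 * Real.sqrt (‖p‖ ^ 4 + 16 * π * ρ * a * ‖p‖ ^ 2))


/-- The Bogoliubov depletion integrand as a function of the radius. -/
def bogf (c r : ℝ) : ℝ :=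
  (r ^ 2 + c - Real.sqrt (r ^ 4 + 2 * c * r ^ 2)) /
    (2 * Real.sqrt (r ^ 4 + 2 * c * r ^ 2))

/-- An antiderivative of `r ↦ r² · bogf c r`. -/
def bogF (c r : ℝ) : ℝ :=
  ((r ^ 2 + 2 * c) * Real.sqrt (r ^ 2 + 2 * c) - 3 * c * Real.sqrt (r ^ 2 + 2 * c) - r ^ 3) / 6

lemma bog_sqrt_pos {c : ℝ} (hc : 0 < c) (r : ℝ) : 0 < Real.sqrt (r ^ 2 + 2 * c) :=
  Real.sqrt_pos.2 (by positivity)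

lemma bog_hasDerivAt {c : ℝ} (hc : 0 < c) {r : ℝ} (hr : 0 < r) :
    HasDerivAt (bogF c) (r ^ 2 * bogf c r) r := by
  set s := Real.sqrt (r ^ 2 + 2 * c) with hs_def
  have hs : 0 < s := bog_sqrt_pos hc r
  have hs2 : s ^ 2 = r ^ 2 + 2 * c := Real.sq_sqrt (by positivity)
  have hsq : HasDerivAt (fun x : ℝ => Real.sqrt (x ^ 2 + 2 * c)) (r / s) r := by
    have h1 : HasDerivAt (fun x : ℝ => x ^ 2 + 2 * c) (2 * r) r := by
      simpa using ((hasDerivAt_pow 2 r).add_const (2 * c))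
    have := h1.sqrt (by positivity)
    convert this using 1
    rw [← hs_def]
    field_simp
  have h2 : HasDerivAt (fun x : ℝ => x ^ 2 + 2 * c) (2 * r) r := by
    simpa using ((hasDerivAt_pow 2 r).add_const (2 * c))
  have h3 : HasDerivAt (fun x : ℝ => x ^ 3) (3 * r ^ 2) r := by
    simpa using hasDerivAt_pow 3 r
  have hF : HasDerivAt (bogF c)
      (((2 * r * s + (r ^ 2 + 2 * c) * (r / s)) - 3 * c * (r / s) - 3 * r ^ 2) / 6) r := by
    exact (((h2.mul hsq).sub ((hsq.const_mul (3 * c)))).sub h3).div_const 6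
  convert hF using 1
  have hrs : Real.sqrt (r ^ 4 + 2 * c * r ^ 2) = r * s := by
    rw [hs_def, show r ^ 4 + 2 * c * r ^ 2 = r ^ 2 * (r ^ 2 + 2 * c) by ring,
      Real.sqrt_mul (sq_nonneg r), Real.sqrt_sq hr.le]
  have hcc : c = (s ^ 2 - r ^ 2) / 2 := by linarith
  rw [bogf, hrs, hcc]
  field_simp
  ring

lemma bog_nonneg {c : ℝ} (hc : 0 < c) {r : ℝ} (hr : 0 < r) : 0 ≤ r ^ 2 * bogf c r := by
  have h1 : Real.sqrt (r ^ 4 + 2 * c * r ^ 2) ≤ r ^ 2 + c := by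
    rw [show r ^ 2 + c = Real.sqrt ((r ^ 2 + c) ^ 2) from (Real.sqrt_sq (by positivity)).symm]
    apply Real.sqrt_le_sqrt; nlinarith
  have h2 : 0 < Real.sqrt (r ^ 4 + 2 * c * r ^ 2) :=
    Real.sqrt_pos.2 (by positivity)
  have h3 : 0 ≤ r ^ 2 + c - Real.sqrt (r ^ 4 + 2 * c * r ^ 2) := by linarith
  exact mul_nonneg (sq_nonneg r) (div_nonneg h3 (by positivity))

lemma bog_closedForm {c : ℝ} (hc : 0 < c) (r : ℝ) (hr : 0 ≤ r) :
    bogF c r = -(c ^ 2 * (2 * r + Real.sqrt (r ^ 2 + 2 * c))) /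
      (3 * (Real.sqrt (r ^ 2 + 2 * c) + r) ^ 2) := by
  set s := Real.sqrt (r ^ 2 + 2 * c) with hs_def
  have hs : 0 < s := bog_sqrt_pos hc r
  have hs2 : s ^ 2 = r ^ 2 + 2 * c := Real.sq_sqrt (by positivity)
  have hsr : 0 < s + r := by linarith
  have hcc : c = (s ^ 2 - r ^ 2) / 2 := by linarith
  rw [bogF, ← hs_def, show r ^ 2 + 2 * c = s ^ 2 from hs2.symm, hcc]
  field_simp
  ring

lemma bog_tendsto {c : ℝ} (hc : 0 < c) : Tendsto (bogF c) atTop (nhds 0) := by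
  refine squeeze_zero_norm' (a := fun r : ℝ => 2 * c ^ 2 / 3 * r⁻¹) ?_ ?_
  · filter_upwards [eventually_gt_atTop (0 : ℝ)] with r hr
    have hs : 0 < Real.sqrt (r ^ 2 + 2 * c) := bog_sqrt_pos hc r
    set s := Real.sqrt (r ^ 2 + 2 * c)
    rw [bog_closedForm hc r hr.le]
    have hsr : 0 < s + r := by linarith
    rw [Real.norm_eq_abs, abs_div, abs_neg,
      abs_of_nonneg (by positivity : (0:ℝ) ≤ c ^ 2 * (2 * r + s)),
      abs_of_nonneg (by positivity : (0:ℝ) ≤ 3 * (s + r) ^ 2)]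
    rw [div_le_iff₀ (by positivity)]
    have key : c ^ 2 * (2 * r + s) * r ≤ 2 * c ^ 2 * (s + r) ^ 2 := by
      have h9 : (0:ℝ) ≤ c ^ 2 * (s * (2 * s + 3 * r)) := by positivity
      nlinarith [h9]
    have heq : 2 * c ^ 2 / 3 * r⁻¹ * (3 * (s + r) ^ 2) = 2 * c ^ 2 * (s + r) ^ 2 / r := by
      field_simp
    rw [heq, le_div_iff₀ hr]
    exact key
  · have := tendsto_inv_atTop_zero.const_mul (2 * c ^ 2 / 3)
    rw [mul_zero] at this
    exact this

lemma bog_integral {c : ℝ} (hc : 0 < c) :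
    IntegrableOn (fun r : ℝ => r ^ 2 * bogf c r) (Set.Ioi 0) volume ∧
      ∫ r in Set.Ioi (0:ℝ), r ^ 2 * bogf c r = c * Real.sqrt (2 * c) / 6 := by
  have hcont : ContinuousWithinAt (bogF c) (Set.Ici 0) 0 := by
    apply Continuous.continuousWithinAt
    unfold bogF
    fun_prop
  have hderiv : ∀ x ∈ Set.Ioi (0:ℝ), HasDerivAt (bogF c) (x ^ 2 * bogf c x) x :=
    fun x hx => bog_hasDerivAt hc hx
  have hpos : ∀ x ∈ Set.Ioi (0:ℝ), 0 ≤ x ^ 2 * bogf c x := fun x hx => bog_nonneg hc hx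
  have hF0 : bogF c 0 = -(c * Real.sqrt (2 * c) / 6) := by
    have h2c : ((0:ℝ) ^ 2 + 2 * c) = 2 * c := by ring
    rw [bogF, h2c]
    ring
  refine ⟨integrableOn_Ioi_deriv_of_nonneg hcont hderiv hpos (bog_tendsto hc), ?_⟩
  rw [integral_Ioi_of_hasDerivAt_of_nonneg hcont hderiv hpos (bog_tendsto hc), hF0]
  ring

/-- Integrability of radial functions on `ℝ³` via polar decomposition. -/
lemma integrable_of_radial (f : ℝ → ℝ)
    (hf : IntegrableOn (fun r : ℝ => r ^ 2 * f r) (Set.Ioi 0) volume) :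
    Integrable (fun x : E3 => f ‖x‖) volume := by
  have hdim : Module.finrank ℝ E3 = 3 := by simp [finrank_euclideanSpace]
  have hemb := (Homeomorph.measurableEmbedding (homeomorphUnitSphereProd E3))
  have hMP := (volume : Measure E3).measurePreserving_homeomorphUnitSphereProd
  have key : Integrable ((fun z : Metric.sphere (0:E3) 1 × Set.Ioi (0:ℝ) => f z.2.1)
      ∘ (homeomorphUnitSphereProd E3)) ((volume : Measure E3).comap Subtype.val) := by
    rw [hMP.integrable_comp_emb hemb]
    have hIoi : Integrable (fun r : Set.Ioi (0:ℝ) => f r.1)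
        (MeasureTheory.Measure.volumeIoiPow (Module.finrank ℝ E3 - 1)) := by
      rw [hdim]
      unfold MeasureTheory.Measure.volumeIoiPow
      rw [integrable_withDensity_iff_integrable_smul' (by fun_prop)
        (ae_of_all _ fun x => ENNReal.ofReal_lt_top)]
      have hsub : Integrable ((fun r : ℝ => (ENNReal.ofReal (r ^ 2)).toReal • f r) ∘
          (Subtype.val : Set.Ioi (0:ℝ) → ℝ))
          (Measure.comap (Subtype.val : Set.Ioi (0:ℝ) → ℝ) volume) := by
        rw [← (MeasurableEmbedding.subtype_coe measurableSet_Ioi).integrable_map_iff,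
          map_comap_subtype_coe measurableSet_Ioi]
        apply hf.congr_fun _ measurableSet_Ioi
        intro x hx
        simp [ENNReal.toReal_ofReal (sq_nonneg x)]
      exact hsub
    have := (integrable_const (μ := (volume : Measure E3).toSphere) (1:ℝ)).smul_prod hIoi
    simpa using this
  have key2 : Integrable (fun x : E3 => f ‖x‖) ((volume : Measure E3).restrict {0}ᶜ) := by
    rw [← map_comap_subtype_coe (measurableSet_singleton (0:E3)).compl,
      (MeasurableEmbedding.subtype_coe (measurableSet_singleton (0:E3)).compl).integrable_map_iff]
    exact key.congr (ae_of_all _ fun x => by simp [Function.comp])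
  simpa using key2

lemma E3_ball_volume : ((volume : Measure E3) (Metric.ball 0 1)).toReal = π * (4 / 3) := by
  rw [EuclideanSpace.volume_ball (Fin 3) 0 1]
  have hcard : (Fintype.card (Fin 3)) = 3 := by simp
  rw [hcard]
  have hG : Real.Gamma ((3 : ℝ) / 2 + 1) = 3 / 4 * Real.sqrt π := by
    rw [Real.Gamma_add_one (by norm_num)]
    have h32 : (3 : ℝ) / 2 = 1 / 2 + 1 := by norm_num
    rw [h32, Real.Gamma_add_one (by norm_num), Real.Gamma_one_half_eq]
    ring
  have hsq : Real.sqrt π ^ 3 = π * Real.sqrt π := by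
    have h' : Real.sqrt π ^ 3 = Real.sqrt π ^ 2 * Real.sqrt π := by ring
    rw [h', Real.sq_sqrt pi_nonneg]
  have hsπ : (0:ℝ) < Real.sqrt π := Real.sqrt_pos.2 pi_pos
  have hval : Real.sqrt π ^ 3 / Real.Gamma ((3:ℝ) / 2 + 1) = π * (4 / 3) := by
    rw [hG, hsq]
    field_simp
  have hc3 : ((3 : ℕ) : ℝ) / 2 + 1 = (3:ℝ)/2 + 1 := by norm_num
  rw [hc3, hval]
  simp [ENNReal.toReal_ofReal (by positivity : (0:ℝ) ≤ π * (4/3))]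

lemma integral_radial_E3 (f : ℝ → ℝ) :
    ∫ x : E3, f ‖x‖ = 4 * π * ∫ r in Set.Ioi (0:ℝ), r ^ 2 * f r := by
  rw [integral_fun_norm_addHaar (volume : Measure E3) f]
  have hdim : Module.finrank ℝ E3 = 3 := by simp [finrank_euclideanSpace]
  rw [hdim, measureReal_def, E3_ball_volume]
  have h2 : (fun y : ℝ => y ^ (3-1) • f y) = fun y : ℝ => y ^ 2 * f y := by
    funext y; norm_num [smul_eq_mul]
  rw [h2, nsmul_eq_mul, smul_eq_mul]
  push_cast
  ring

/-- For all `ρ > 0` and `a > 0`, the Bogoliubov depletion integrand is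
Lebesgue integrable on `ℝ³` and
`(2π)^{−3} ∫ (|p|² + 8πρa − √(|p|⁴+16πρa|p|²)) / (2√(|p|⁴+16πρa|p|²)) dp
  = (8/(3√π)) (ρa)^{3/2}`
(the Bogoliubov condensate-depletion formula `ρ₊/ρ = (8/(3√π))√(ρa³)`). -/
theorem bogoliubov_condensate_depletion (ρ a : ℝ) (hρ : 0 < ρ) (ha : 0 < a) :
    Integrable (deplIntegrand ρ a) volume ∧
    ((2 * π) ^ 3)⁻¹ * (∫ p : E3, deplIntegrand ρ a p)
      = (8 / (3 * Real.sqrt π)) * (ρ * a) ^ ((3 : ℝ) / 2) := by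
  have hc : 0 < 8 * π * ρ * a := by positivity
  have hfun : deplIntegrand ρ a = fun p : E3 => bogf (8 * π * ρ * a) ‖p‖ := by
    funext p
    rw [deplIntegrand, bogf,
      show (16:ℝ) * π * ρ * a = 2 * (8 * π * ρ * a) by ring]
  obtain ⟨hInt1D, hval⟩ := bog_integral hc
  constructor
  · rw [hfun]
    exact integrable_of_radial _ hInt1D
  · simp only [hfun]
    rw [integral_radial_E3 (bogf (8 * π * ρ * a)), hval]
    have hS2 : Real.sqrt π ^ 2 = π := Real.sq_sqrt pi_nonneg
    have hS : 0 < Real.sqrt π := Real.sqrt_pos.2 pi_pos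
    have hra : (ρ * a) ^ ((3:ℝ)/2) = (ρ * a) * Real.sqrt (ρ * a) := by
      rw [show (3:ℝ)/2 = 1 + 1/2 by norm_num, Real.rpow_add (by positivity),
        Real.rpow_one, Real.sqrt_eq_rpow]
    have h1 : Real.sqrt (2 * (8 * π * ρ * a)) = 4 * Real.sqrt π * Real.sqrt (ρ * a) := by
      rw [show 2 * (8 * π * ρ * a) = 16 * (π * (ρ * a)) by ring,
        Real.sqrt_mul (by norm_num), Real.sqrt_mul pi_nonneg,
        show (16:ℝ) = 4 ^ 2 by norm_num, Real.sqrt_sq (by norm_num)]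
      ring
    rw [hra, h1]
    field_simp
    linear_combination 48 * hS2


end
end
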